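/- Let A be a finite-dimensional nilpotent n-Lie superalgebra. Then the Frattini subalgebra F(A), the Frattini ideal φ(A), the Jacobson radical J(A), and the derived subalgebra A^{(1)} = [A,...,A] all coincide. -/

import Mathlib

/-- The sign `(-1)^t` for a parity `t ∈ ℤ/2`, as an element of the field `F`. -/
def superSgn (F : Type*) [Field F] (t : ZMod 2) : F := if t = 0 then 1 else -1

/-- An `n`-Lie superalgebra of parity `α` over a field `F`: a `ℤ/2`-graded vector space `A`
with an `n`-linear bracket which is homogeneous of degree `α`, skew-supersymmetric, and
satisfies the super Filippov–Jacobi identity (every left multiplication operator is a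
superderivation). -/
structure NLieSuper (F : Type*) (A : Type*) [Field F] [AddCommGroup A] [Module F A]
    (n : ℕ) (α : ZMod 2) where
  bracket : MultilinearMap F (fun _ : Fin n => A) A
  grading : ZMod 2 → Submodule F A
  internal : DirectSum.IsInternal grading
  bracket_grade : ∀ (x : Fin n → A) (g : Fin n → ZMod 2),
    (∀ i, x i ∈ grading (g i)) → bracket x ∈ grading (α + ∑ i, g i)
  skew : ∀ (x : Fin n → A) (g : Fin n → ZMod 2), (∀ i, x i ∈ grading (g i)) →
    ∀ i j : Fin n, (i : ℕ) + 1 = (j : ℕ) →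
      bracket (x ∘ Equiv.swap i j) = - (superSgn F (g i * g j)) • bracket x
  jacobi : ∀ (a : Fin n → A) (ga : Fin n → ZMod 2), (∀ l, a l ∈ grading (ga l)) →
    ∀ (b : Fin n → A) (gb : Fin n → ZMod 2), (∀ l, b l ∈ grading (gb l)) →
    ∀ i : Fin n,
      bracket (Function.update a i (bracket b)) =
      ∑ j : Fin n,
        (superSgn F ((∑ l ∈ Finset.univ.erase i, ga l) *
            (α + ∑ l ∈ Finset.univ.filter (fun l => l < j), gb l))) •
          bracket (Function.update b j (bracket (Function.update a i (b j))))

namespace NLieSuper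

variable {F A : Type*} [Field F] [AddCommGroup A] [Module F A] {n : ℕ} {α : ZMod 2}

/-- A graded subspace (`vector superspace`): `S = (S ⊓ A₀) ⊕ (S ⊓ A₁)`. -/
def IsGraded (L : NLieSuper F A n α) (S : Submodule F A) : Prop :=
  S ≤ (S ⊓ L.grading 0) ⊔ (S ⊓ L.grading 1)

/-- A subalgebra: a graded subspace closed under the bracket. -/
def IsSubalgebra (L : NLieSuper F A n α) (S : Submodule F A) : Prop :=
  L.IsGraded S ∧ ∀ x : Fin n → A, (∀ i, x i ∈ S) → L.bracket x ∈ S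

/-- An ideal: a graded subspace `I` with `[A,…,A,I] ⊆ I`. -/
def IsIdeal (L : NLieSuper F A n α) (S : Submodule F A) : Prop :=
  L.IsGraded S ∧ ∀ x : Fin n → A, (∃ i, x i ∈ S) → L.bracket x ∈ S

/-- `[A,…,A,M]`: the span of all brackets with at least one entry in `M`. -/
def amul (L : NLieSuper F A n α) (M : Submodule F A) : Submodule F A :=
  Submodule.span F {z | ∃ x : Fin n → A, (∃ i, x i ∈ M) ∧ z = L.bracket x}

/-- The lower central series: `lcs 0 = A¹ = A`, `lcs s = A^{s+1} = [A,…,A,A^s]`. -/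
def lcs (L : NLieSuper F A n α) : ℕ → Submodule F A
  | 0 => ⊤
  | s + 1 => L.amul (L.lcs s)

/-- `A` is nilpotent if the lower central series reaches `0`. -/
def IsNilpotentAlg (L : NLieSuper F A n α) : Prop := ∃ v, L.lcs v = ⊥

/-- The derived subalgebra `A² = [A,…,A]`. -/
def derived (L : NLieSuper F A n α) : Submodule F A := L.lcs 1

/-- Maximal subalgebras: proper subalgebras maximal among proper subalgebras. -/
def IsMaximalSubalgebra (L : NLieSuper F A n α) (S : Submodule F A) : Prop :=
  L.IsSubalgebra S ∧ S ≠ ⊤ ∧ ∀ T, L.IsSubalgebra T → S < T → T = ⊤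

/-- The Frattini subalgebra: the intersection of all maximal subalgebras. -/
def frattini (L : NLieSuper F A n α) : Submodule F A :=
  sInf {S | L.IsMaximalSubalgebra S}

end NLieSuper

namespace NLieSuper

variable {F A : Type*} [Field F] [AddCommGroup A] [Module F A] {n : ℕ} {α : ZMod 2}

/-- Maximal ideals: proper ideals maximal among proper ideals. -/
def IsMaximalIdeal (L : NLieSuper F A n α) (S : Submodule F A) : Prop :=
  L.IsIdeal S ∧ S ≠ ⊤ ∧ ∀ T, L.IsIdeal T → S < T → T = ⊤

/-- The Jacobson radical: the intersection of all maximal ideals. -/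
def jacobson (L : NLieSuper F A n α) : Submodule F A :=
  sInf {S | L.IsMaximalIdeal S}

/-- The `k`-derived series `A^{(0)} = A`,
`A^{(s+1)} = [A^{(s)},…,A^{(s)} (k times), A,…,A (n-k times)]`. -/
def kDerived (L : NLieSuper F A n α) (k : ℕ) : ℕ → Submodule F A
  | 0 => ⊤
  | s + 1 => Submodule.span F
      {z | ∃ x : Fin n → A,
        (∃ t : Finset (Fin n), t.card = k ∧ ∀ i ∈ t, x i ∈ L.kDerived k s) ∧ z = L.bracket x}

/-- `A` is `k`-solvable if the `k`-derived series reaches `0`. -/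
def IsKSolvable (L : NLieSuper F A n α) (k : ℕ) : Prop := ∃ r, L.kDerived k r = ⊥

end NLieSuper

namespace NLieSuper

variable {F A : Type*} [Field F] [AddCommGroup A] [Module F A] {n : ℕ} {α : ZMod 2}

/-- The Frattini ideal `φ(A)`: the largest ideal of `A` contained in `F(A)`. -/
def phi (L : NLieSuper F A n α) : Submodule F A :=
  sSup {I | L.IsIdeal I ∧ I ≤ L.frattini}

end NLieSuper

/-!
In a nilpotent algebra `A`, a subalgebra `M` with `M + A² = A` is all of `A`: expanding brackets
multilinearly, `M + A^s = A` propagates to `M + A^{s+1} = A`, and `A^v = 0` for some `v`. Hence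
`A²` lies in every maximal subalgebra and every maximal ideal, since otherwise adding the graded
ideal `A²` would give all of `A`. Conversely every graded subspace containing `A²` is an ideal,
and any `x ∉ A²` is avoided by a graded hyperplane through `A²`: if the even part of `x` is not
in `A²`, take a hyperplane containing `A² + A₁` but not that part (and symmetrically). Such a
hyperplane is both a maximal subalgebra and a maximal ideal.
-/

section GradedLattice

variable {α : Type*} [Lattice α] {P Q S T : α}

theorem sup_le_inf_sup_inf (hS : S ≤ S ⊓ P ⊔ S ⊓ Q) (hT : T ≤ T ⊓ P ⊔ T ⊓ Q) :
    S ⊔ T ≤ (S ⊔ T) ⊓ P ⊔ (S ⊔ T) ⊓ Q :=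
  sup_le
    (hS.trans (sup_le_sup (inf_le_inf_right _ le_sup_left) (inf_le_inf_right _ le_sup_left)))
    (hT.trans (sup_le_sup (inf_le_inf_right _ le_sup_right) (inf_le_inf_right _ le_sup_right)))

variable [IsModularLattice α]

theorem le_inf_sup_inf_of_le [OrderTop α] (hPQ : P ⊔ Q = ⊤) (hQS : Q ≤ S) :
    S ≤ S ⊓ P ⊔ S ⊓ Q := by
  rw [inf_eq_right.2 hQS, inf_sup_assoc_of_le _ hQS, hPQ, inf_top_eq]

theorem sup_inf_le_of_le_inf_sup_inf [OrderBot α] (hPQ : Disjoint P Q)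
    (hS : S ≤ S ⊓ P ⊔ S ⊓ Q) : (S ⊔ Q) ⊓ P ≤ S :=
  calc (S ⊔ Q) ⊓ P ≤ (S ⊓ P ⊔ Q) ⊓ P :=
        inf_le_inf_right _ (sup_le (hS.trans (sup_le_sup_left inf_le_right _)) le_sup_right)
    _ = S ⊓ P := by rw [sup_inf_assoc_of_le _ inf_le_right, inf_comm Q, hPQ.eq_bot, sup_bot_eq]
    _ ≤ S := inf_le_left

end GradedLattice

section Hyperplane

variable {K V : Type*} [Field K] [AddCommGroup V] [Module K V]

theorem Submodule.exists_isCoatom_le_of_notMem {W : Submodule K V} {x : V} (hx : x ∉ W) :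
    ∃ H : Submodule K V, IsCoatom H ∧ W ≤ H ∧ x ∉ H := by
  obtain ⟨f, hfx, hW⟩ := W.exists_dual_map_eq_bot_of_notMem hx inferInstance
  have hf : Function.Surjective f :=
    f.surjective_or_eq_zero.resolve_right fun h => hfx (by simp [h])
  exact ⟨LinearMap.ker f, LinearMap.isCoatom_ker_of_surjective hf,
    LinearMap.le_ker_iff_map.2 hW, hfx⟩

variable {P Q D : Submodule K V}

theorem exists_graded_isCoatom_of_component_notMem (hPQ : IsCompl P Q)
    (hD : D ≤ D ⊓ P ⊔ D ⊓ Q) {y z : V} (hy : y ∈ P) (hz : z ∈ Q) (hyD : y ∉ D) :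
    ∃ H : Submodule K V, IsCoatom H ∧ D ≤ H ∧ y + z ∉ H ∧ H ≤ H ⊓ P ⊔ H ⊓ Q := by
  have hy' : y ∉ D ⊔ Q := fun h => hyD (sup_inf_le_of_le_inf_sup_inf hPQ.disjoint hD ⟨h, hy⟩)
  obtain ⟨H, hH, hDQ, hyH⟩ := Submodule.exists_isCoatom_le_of_notMem hy'
  have hQH : Q ≤ H := le_sup_right.trans hDQ
  exact ⟨H, hH, le_sup_left.trans hDQ, fun h => hyH ((H.add_mem_iff_left (hQH hz)).1 h),
    le_inf_sup_inf_of_le hPQ.sup_eq_top hQH⟩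

theorem exists_graded_isCoatom_of_notMem (hPQ : IsCompl P Q) (hD : D ≤ D ⊓ P ⊔ D ⊓ Q)
    {x : V} (hx : x ∉ D) :
    ∃ H : Submodule K V, IsCoatom H ∧ D ≤ H ∧ x ∉ H ∧ H ≤ H ⊓ P ⊔ H ⊓ Q := by
  obtain ⟨y, hy, z, hz, rfl⟩ := Submodule.mem_sup.1 (hPQ.sup_eq_top ▸ Submodule.mem_top (x := x))
  by_cases hyD : y ∈ D
  · have hzD : z ∉ D := fun hzD => hx (D.add_mem hyD hzD)
    rw [sup_comm] at hD
    obtain ⟨H, hH, hDH, hzyH, hHg⟩ :=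
      exists_graded_isCoatom_of_component_notMem hPQ.symm hD hz hy hzD
    exact ⟨H, hH, hDH, add_comm y z ▸ hzyH, sup_comm (H ⊓ Q) _ ▸ hHg⟩
  · exact exists_graded_isCoatom_of_component_notMem hPQ hD hy hz hyD

end Hyperplane

theorem MultilinearMap.map_mem_span_image_of_sup_eq_top {R ι M N : Type*} [CommSemiring R]
    [AddCommMonoid M] [Module R M] [AddCommMonoid N] [Module R N] [Fintype ι]
    (f : MultilinearMap R (fun _ : ι => M) N) {P Q : Submodule R M} (hPQ : P ⊔ Q = ⊤)
    (x : ι → M) : f x ∈ Submodule.span R (f '' {y | ∀ i, y i ∈ P ∨ y i ∈ Q}) := by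
  classical
  choose p hp q hq hpq using fun i => Submodule.mem_sup.1 (hPQ ▸ Submodule.mem_top (x := x i))
  rw [show x = p + q from funext fun i => (hpq i).symm, f.map_add_univ]
  refine Submodule.sum_mem _ fun s _ => Submodule.subset_span ⟨_, fun i => ?_, rfl⟩
  by_cases hi : i ∈ s
  · simp [hi, hp]
  · simp [hi, hq]

namespace NLieSuper

variable {F A : Type*} [Field F] [AddCommGroup A] [Module F A] {n : ℕ} {α : ZMod 2}
  (L : NLieSuper F A n α)

theorem isCompl_grading : IsCompl (L.grading 0) (L.grading 1) :=
  L.internal.isCompl (by decide) (by ext t; simp; revert t; decide)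

variable {L}

theorem IsGraded.sup {S T : Submodule F A} (hS : L.IsGraded S) (hT : L.IsGraded T) :
    L.IsGraded (S ⊔ T) :=
  sup_le_inf_sup_inf hS hT

theorem IsIdeal.isSubalgebra [NeZero n] {S : Submodule F A} (hS : L.IsIdeal S) :
    L.IsSubalgebra S :=
  ⟨hS.1, fun x hx => hS.2 x ⟨0, hx 0⟩⟩

variable (L)

theorem bracket_mem_derived [NeZero n] (x : Fin n → A) : L.bracket x ∈ L.derived :=
  Submodule.subset_span ⟨x, ⟨0, trivial⟩, rfl⟩

theorem isIdeal_of_derived_le [NeZero n] {S : Submodule F A} (hS : L.IsGraded S)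
    (hd : L.derived ≤ S) : L.IsIdeal S :=
  ⟨hS, fun x _ => hd (L.bracket_mem_derived x)⟩

theorem isGraded_derived [NeZero n] : L.IsGraded L.derived := by
  classical
  have hpiece : ∀ t, L.derived ⊓ L.grading t ≤
      L.derived ⊓ L.grading 0 ⊔ L.derived ⊓ L.grading 1 := by
    intro t
    fin_cases t
    exacts [le_sup_left, le_sup_right]
  refine Submodule.span_le.2 ?_
  rintro _ ⟨x, -, rfl⟩
  refine Submodule.span_le.2 ?_
    (L.bracket.map_mem_span_image_of_sup_eq_top L.isCompl_grading.sup_eq_top x)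
  rintro _ ⟨y, hy, rfl⟩
  refine hpiece _ ⟨L.bracket_mem_derived y,
    L.bracket_grade y (fun i => if y i ∈ L.grading 0 then 0 else 1) fun i => ?_⟩
  by_cases h0 : y i ∈ L.grading 0
  · simp [h0]
  · simpa [h0] using (hy i).resolve_left h0

theorem derived_le_sup_amul {M Q : Submodule F A}
    (hM : ∀ x : Fin n → A, (∀ i, x i ∈ M) → L.bracket x ∈ M) (hMQ : M ⊔ Q = ⊤) :
    L.derived ≤ M ⊔ L.amul Q := by
  refine Submodule.span_le.2 ?_
  rintro _ ⟨x, -, rfl⟩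
  refine Submodule.span_le.2 ?_ (L.bracket.map_mem_span_image_of_sup_eq_top hMQ x)
  rintro _ ⟨y, hy, rfl⟩
  by_cases hyM : ∀ i, y i ∈ M
  · exact Submodule.mem_sup_left (hM y hyM)
  · obtain ⟨i, hi⟩ := not_forall.1 hyM
    exact Submodule.mem_sup_right (Submodule.subset_span ⟨y, ⟨i, (hy i).resolve_left hi⟩, rfl⟩)

theorem eq_top_of_sup_derived_eq_top (hnil : L.IsNilpotentAlg) {M : Submodule F A}
    (hM : ∀ x : Fin n → A, (∀ i, x i ∈ M) → L.bracket x ∈ M) (hMD : M ⊔ L.derived = ⊤) :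
    M = ⊤ := by
  have hlcs : ∀ s, M ⊔ L.lcs s = ⊤ := by
    intro s
    induction s with
    | zero => exact sup_top_eq M
    | succ s ih =>
      refine top_unique ?_
      calc ⊤ = M ⊔ L.derived := hMD.symm
        _ ≤ M ⊔ (M ⊔ L.lcs (s + 1)) := sup_le_sup_left (L.derived_le_sup_amul hM ih) M
        _ = M ⊔ L.lcs (s + 1) := by rw [← sup_assoc, sup_idem]
  obtain ⟨v, hv⟩ := hnil
  simpa [hv] using hlcs v

theorem derived_le_of_maximal [NeZero n] (hnil : L.IsNilpotentAlg) {M : Submodule F A}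
    (hM : L.IsSubalgebra M) (hM_ne : M ≠ ⊤)
    (hmax : ∀ T, L.IsGraded T → L.derived ≤ T → M < T → T = ⊤) : L.derived ≤ M := by
  by_contra h
  exact hM_ne <| L.eq_top_of_sup_derived_eq_top hnil hM.2 <|
    hmax _ (hM.1.sup L.isGraded_derived) le_sup_right (left_lt_sup.2 h)

theorem sInf_le_derived [NeZero n] {𝒮 : Set (Submodule F A)}
    (h𝒮 : ∀ H, L.IsGraded H → L.derived ≤ H → IsCoatom H → H ∈ 𝒮) : sInf 𝒮 ≤ L.derived := by
  intro x hx
  by_contra hxD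
  obtain ⟨H, hH, hDH, hxH, hHg⟩ :=
    exists_graded_isCoatom_of_notMem L.isCompl_grading L.isGraded_derived hxD
  exact hxH (Submodule.mem_sInf.1 hx H (h𝒮 H hHg hDH hH))

theorem frattini_eq_derived [NeZero n] (hnil : L.IsNilpotentAlg) : L.frattini = L.derived := by
  refine le_antisymm (L.sInf_le_derived fun H hHg hDH hH => ?_) (le_sInf ?_)
  · exact ⟨(L.isIdeal_of_derived_le hHg hDH).isSubalgebra, hH.1, fun T _ => hH.2 T⟩
  · rintro M ⟨hM, hM_ne, hmax⟩
    exact L.derived_le_of_maximal hnil hM hM_ne fun T hTg hDT =>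
      hmax T (L.isIdeal_of_derived_le hTg hDT).isSubalgebra

theorem jacobson_eq_derived [NeZero n] (hnil : L.IsNilpotentAlg) : L.jacobson = L.derived := by
  refine le_antisymm (L.sInf_le_derived fun H hHg hDH hH => ?_) (le_sInf ?_)
  · exact ⟨L.isIdeal_of_derived_le hHg hDH, hH.1, fun T _ => hH.2 T⟩
  · rintro M ⟨hM, hM_ne, hmax⟩
    exact L.derived_le_of_maximal hnil hM.isSubalgebra hM_ne fun T hTg hDT =>
      hmax T (L.isIdeal_of_derived_le hTg hDT)

theorem phi_eq_derived [NeZero n] (hnil : L.IsNilpotentAlg) : L.phi = L.derived := by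
  rw [phi, L.frattini_eq_derived hnil]
  exact le_antisymm (sSup_le fun I hI => hI.2)
    (le_sSup ⟨L.isIdeal_of_derived_le L.isGraded_derived le_rfl, le_rfl⟩)

end NLieSuper

theorem frattini_eq_phi_eq_jacobson_eq_derived_general {F A : Type*} [Field F] [AddCommGroup A]
    [Module F A] {n : ℕ} (hn : 2 ≤ n) {α : ZMod 2}
    (L : NLieSuper F A n α) (hnil : L.IsNilpotentAlg) :
    L.frattini = L.derived ∧ L.phi = L.derived ∧ L.jacobson = L.derived := by
  have : NeZero n := ⟨by omega⟩
  exact ⟨L.frattini_eq_derived hnil, L.phi_eq_derived hnil, L.jacobson_eq_derived hnil⟩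

/-- For a finite-dimensional nilpotent `n`-Lie superalgebra, the Frattini subalgebra, the
Frattini ideal, the Jacobson radical and the derived subalgebra all coincide:
`F(A) = φ(A) = J(A) = A^{(1)}`. -/
theorem frattini_eq_phi_eq_jacobson_eq_derived {F A : Type*} [Field F] [AddCommGroup A]
    [Module F A] [FiniteDimensional F A] {n : ℕ} (hn : 2 ≤ n) {α : ZMod 2}
    (L : NLieSuper F A n α) (hnil : L.IsNilpotentAlg) :
    L.frattini = L.derived ∧ L.phi = L.derived ∧ L.jacobson = L.derived :=
  frattini_eq_phi_eq_jacobson_eq_derived_general hn L hnil
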